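/- Let D ≥ 1, let K and L be constant skew-symmetric real D×D matrices, let S : ℝ^D → ℝ be twice continuously differentiable, and let z : ℝ × ℝ → ℝ^D be continuous. Suppose u, v : ℝ × ℝ → ℝ^D are continuously differentiable solutions of the variational (linearized) equation K ∂_t w + L ∂_x w = Hess S(z(t,x)) w, i.e. both u and v satisfy it pointwise, where Hess S(p) is the (symmetric) Hessian matrix of S at p. Then the multisymplectic conservation law ∂_t (u·(K v)) + ∂_x (u·(L v)) = 0 holds at every point (t,x) ∈ ℝ². -/

import Mathlib

open Matrix

/-- Partial derivative in the first (time) variable. -/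
noncomputable def pt {E : Type*} [NormedAddCommGroup E] [NormedSpace ℝ E]
    (z : ℝ × ℝ → E) (p : ℝ × ℝ) : E :=
  deriv (fun s => z (s, p.2)) p.1

/-- Partial derivative in the second (space) variable. -/
noncomputable def px {E : Type*} [NormedAddCommGroup E] [NormedSpace ℝ E]
    (z : ℝ × ℝ → E) (p : ℝ × ℝ) : E :=
  deriv (fun y => z (p.1, y)) p.2

/-- Hessian matrix of `S : ℝ^D → ℝ` at a point, via iterated Fréchet derivatives. -/
noncomputable def hess {D : ℕ} (S : (Fin D → ℝ) → ℝ) (p : Fin D → ℝ) :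
    Matrix (Fin D) (Fin D) ℝ :=
  Matrix.of fun i j => fderiv ℝ (fun q => fderiv ℝ S q (Pi.single j 1)) p (Pi.single i 1)

/-!
By the product rule the left-hand side splits as
`(∂ₜu ⬝ᵥ K v + ∂ₓu ⬝ᵥ L v) + (u ⬝ᵥ K ∂ₜv + u ⬝ᵥ L ∂ₓv)`.
Skew-symmetry moves `K` and `L` across the dot product, so the first bracket is
`-(K ∂ₜu + L ∂ₓu) ⬝ᵥ v = -(H u ⬝ᵥ v)` and the second is `u ⬝ᵥ H v`, where `H` is the Hessian;
they cancel because the Hessian of a `C²` function is symmetric.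
-/

section ProductRule

variable {𝕜 ι : Type*} [NontriviallyNormedField 𝕜] [Fintype ι]
  {f g : 𝕜 → ι → 𝕜} {f' g' : ι → 𝕜} {x : 𝕜}

theorem HasDerivAt.dotProduct (hf : HasDerivAt f f' x) (hg : HasDerivAt g g' x) :
    HasDerivAt (fun s => f s ⬝ᵥ g s) (f' ⬝ᵥ g x + f x ⬝ᵥ g') x := by
  have hsum := HasDerivAt.fun_sum (u := Finset.univ) fun i _ =>
    (hasDerivAt_pi.1 hf i).fun_mul (hasDerivAt_pi.1 hg i)
  simpa only [_root_.dotProduct, Finset.sum_add_distrib] using hsum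

theorem HasDerivAt.mulVec (M : Matrix ι ι 𝕜) (hg : HasDerivAt g g' x) :
    HasDerivAt (fun s => M *ᵥ g s) (M *ᵥ g') x :=
  hasDerivAt_pi.2 fun i =>
    ((hasDerivAt_const x (M i)).dotProduct hg).congr_deriv
      (by rw [zero_dotProduct, zero_add]; rfl)

end ProductRule

section PartialDerivatives

variable {E : Type*} [NormedAddCommGroup E] [NormedSpace ℝ E] {f : ℝ × ℝ → E} {p : ℝ × ℝ}

theorem hasDerivAt_pt (hf : DifferentiableAt ℝ f p) :
    HasDerivAt (fun s => f (s, p.2)) (pt f p) p.1 :=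
  (hf.comp p.1 (differentiableAt_id.prodMk (differentiableAt_const _))).hasDerivAt

theorem hasDerivAt_px (hf : DifferentiableAt ℝ f p) :
    HasDerivAt (fun y => f (p.1, y)) (px f p) p.2 :=
  (hf.comp p.2 ((differentiableAt_const _).prodMk differentiableAt_id)).hasDerivAt

variable {ι : Type*} [Fintype ι] {u v : ℝ × ℝ → ι → ℝ}

theorem pt_dotProduct_mulVec (M : Matrix ι ι ℝ) (hu : DifferentiableAt ℝ u p)
    (hv : DifferentiableAt ℝ v p) :
    pt (fun q => u q ⬝ᵥ M *ᵥ v q) p = pt u p ⬝ᵥ M *ᵥ v p + u p ⬝ᵥ M *ᵥ pt v p :=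
  ((hasDerivAt_pt hu).dotProduct ((hasDerivAt_pt hv).mulVec M)).deriv

theorem px_dotProduct_mulVec (M : Matrix ι ι ℝ) (hu : DifferentiableAt ℝ u p)
    (hv : DifferentiableAt ℝ v p) :
    px (fun q => u q ⬝ᵥ M *ᵥ v q) p = px u p ⬝ᵥ M *ᵥ v p + u p ⬝ᵥ M *ᵥ px v p :=
  ((hasDerivAt_px hu).dotProduct ((hasDerivAt_px hv).mulVec M)).deriv

end PartialDerivatives

theorem hess_transpose {D : ℕ} {S : (Fin D → ℝ) → ℝ} (hS : ContDiff ℝ 2 S) (p : Fin D → ℝ) :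
    (hess S p)ᵀ = hess S p := by
  have hdS : DifferentiableAt ℝ (fderiv ℝ S) p :=
    (hS.fderiv_right le_rfl).differentiable one_ne_zero p
  have hess_apply (i j : Fin D) :
      hess S p i j = fderiv ℝ (fderiv ℝ S) p (Pi.single i 1) (Pi.single j 1) := by
    simp [hess, fderiv_clm_apply hdS (differentiableAt_const _)]
  ext i j
  rw [transpose_apply, hess_apply, hess_apply]
  exact hS.contDiffAt.isSymmSndFDerivAt (by simp) _ _

namespace Matrix

variable {R n : Type*} [CommRing R] [Fintype n] {K L H : Matrix n n R}

theorem dotProduct_mulVec_of_transpose_eq_neg (hK : Kᵀ = -K) (a b : n → R) :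
    a ⬝ᵥ K *ᵥ b = -(K *ᵥ a ⬝ᵥ b) := by
  rw [dotProduct_mulVec, ← mulVec_transpose, hK, neg_mulVec, neg_dotProduct]

theorem dotProduct_mulVec_of_transpose_eq (hH : Hᵀ = H) (a b : n → R) :
    a ⬝ᵥ H *ᵥ b = H *ᵥ a ⬝ᵥ b := by
  rw [dotProduct_mulVec, ← mulVec_transpose, hH]

theorem variational_pairing_eq_zero (hK : Kᵀ = -K) (hL : Lᵀ = -L) (hH : Hᵀ = H)
    {u v uₜ uₓ vₜ vₓ : n → R} (hu : K *ᵥ uₜ + L *ᵥ uₓ = H *ᵥ u)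
    (hv : K *ᵥ vₜ + L *ᵥ vₓ = H *ᵥ v) :
    (uₜ ⬝ᵥ K *ᵥ v + u ⬝ᵥ K *ᵥ vₜ) + (uₓ ⬝ᵥ L *ᵥ v + u ⬝ᵥ L *ᵥ vₓ) = 0 := by
  have hsum_u : uₜ ⬝ᵥ K *ᵥ v + uₓ ⬝ᵥ L *ᵥ v = -(H *ᵥ u ⬝ᵥ v) := by
    rw [dotProduct_mulVec_of_transpose_eq_neg hK, dotProduct_mulVec_of_transpose_eq_neg hL,
      ← neg_add, ← add_dotProduct, hu]
  have hsum_v : u ⬝ᵥ K *ᵥ vₜ + u ⬝ᵥ L *ᵥ vₓ = H *ᵥ u ⬝ᵥ v := by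
    rw [← dotProduct_add, hv, dotProduct_mulVec_of_transpose_eq hH]
  linear_combination hsum_u + hsum_v

end Matrix

theorem multisymplectic_conservation_law_general
    (D : ℕ)
    (K L : Matrix (Fin D) (Fin D) ℝ)
    (hK : Kᵀ = -K) (hL : Lᵀ = -L)
    (S : (Fin D → ℝ) → ℝ) (hS : ContDiff ℝ 2 S)
    (z : ℝ × ℝ → Fin D → ℝ)
    (u v : ℝ × ℝ → Fin D → ℝ) (hu : ContDiff ℝ 1 u) (hv : ContDiff ℝ 1 v)
    (hu_var : ∀ p : ℝ × ℝ,
      K.mulVec (pt u p) + L.mulVec (px u p) = (hess S (z p)).mulVec (u p))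
    (hv_var : ∀ p : ℝ × ℝ,
      K.mulVec (pt v p) + L.mulVec (px v p) = (hess S (z p)).mulVec (v p)) :
    ∀ p : ℝ × ℝ,
      pt (fun q => u q ⬝ᵥ K.mulVec (v q)) p
        + px (fun q => u q ⬝ᵥ L.mulVec (v q)) p = 0 := by
  intro p
  have hup := hu.differentiable one_ne_zero p
  have hvp := hv.differentiable one_ne_zero p
  rw [pt_dotProduct_mulVec K hup hvp, px_dotProduct_mulVec L hup hvp]
  exact variational_pairing_eq_zero hK hL (hess_transpose hS (z p)) (hu_var p) (hv_var p)

/-- The multisymplectic conservation law: if `u` and `v` solve the variational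
(linearized) equation `K ∂_t w + L ∂_x w = Hess S(z) w`, then
`∂_t (u·(K v)) + ∂_x (u·(L v)) = 0`. -/
theorem multisymplectic_conservation_law
    (D : ℕ) (hD : 1 ≤ D)
    (K L : Matrix (Fin D) (Fin D) ℝ)
    (hK : Kᵀ = -K) (hL : Lᵀ = -L)
    (S : (Fin D → ℝ) → ℝ) (hS : ContDiff ℝ 2 S)
    (z : ℝ × ℝ → Fin D → ℝ) (hz : Continuous z)
    (u v : ℝ × ℝ → Fin D → ℝ) (hu : ContDiff ℝ 1 u) (hv : ContDiff ℝ 1 v)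
    (hu_var : ∀ p : ℝ × ℝ,
      K.mulVec (pt u p) + L.mulVec (px u p) = (hess S (z p)).mulVec (u p))
    (hv_var : ∀ p : ℝ × ℝ,
      K.mulVec (pt v p) + L.mulVec (px v p) = (hess S (z p)).mulVec (v p)) :
    ∀ p : ℝ × ℝ,
      pt (fun q => u q ⬝ᵥ K.mulVec (v q)) p
        + px (fun q => u q ⬝ᵥ L.mulVec (v q)) p = 0 :=
  multisymplectic_conservation_law_general D K L hK hL S hS z u v hu hv hu_var hv_var
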